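/- Let u ≤_k w and u' ≤_{k'} w' in S∞ with w·u⁻¹ = w'·(u')⁻¹. Then the map v ↦ v·u⁻¹·u' is an isomorphism of partially ordered sets from the interval [u, w]_k = {v : u ≤_k v ≤_k w} in the k-Bruhat order onto the interval [u', w']_{k'} in the k'-Bruhat order. -/

import Mathlib

/-
Common definitions for "A Monoid for the universal k-Bruhat order"
(Bergeron–Sottile).

`S∞` is modeled as `Equiv.Perm ℕ+`; membership in `S∞` (finite support)
is the predicate `FinSupp`.
-/

noncomputable section

open scoped Classical

/-- `S∞`: permutations of the positive integers `{1,2,3,...}`. -/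
abbrev Sinf : Type := Equiv.Perm ℕ+

/-- A permutation belongs to `S∞` iff it moves only finitely many points. -/
def FinSupp (w : Sinf) : Prop := {i : ℕ+ | w i ≠ i}.Finite

/-- `ℓ(w)`: the number of inversions, i.e. pairs `i < j` with `w i > w j`. -/
def len (w : Sinf) : ℕ := {p : ℕ+ × ℕ+ | p.1 < p.2 ∧ w p.2 < w p.1}.ncard

/-- The cover relation of the `k`-Bruhat order: `w` covers `u` iff
`ℓ(w) = ℓ(u) + 1` and `w = u·(a b)` for some `a ≤ k < b`. -/
def kCover (k : ℕ+) (u w : Sinf) : Prop :=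
  len w = len u + 1 ∧ ∃ a b : ℕ+, a ≤ k ∧ k < b ∧ w = u * Equiv.swap a b

/-- The `k`-Bruhat order `≤ₖ`: the partial order generated by `kCover`. -/
def kBruhat (k : ℕ+) : Sinf → Sinf → Prop := Relation.ReflTransGen (kCover k)

/-- `ℓᵤ(ζ) = ℓ(ζu) − ℓ(u)` for any (some chosen) `u ∈ S∞`, `k` with `u ≤ₖ ζu`. -/
def ellU (ζ : Sinf) : ℕ :=
  if h : ∃ p : Sinf × ℕ+, FinSupp p.1 ∧ kBruhat p.2 p.1 (ζ * p.1) then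
    len (ζ * h.choose.1) - len h.choose.1
  else 0

/-- `ℚ[S∞]` as a `ℚ`-vector space with basis the permutations. -/
abbrev QS : Type := Sinf →₀ ℚ

/-- The operator `û_{αβ}` on `ℚ[S∞]`: on a basis permutation `ζ` it gives
`(α β)·ζ` if `ℓᵤ((α β)ζ) = ℓᵤ(ζ) + 1`, and `0` otherwise. -/
def uhat (α β : ℕ+) : QS →ₗ[ℚ] QS :=
  Finsupp.lsum ℚ (fun ζ : Sinf =>
    LinearMap.toSpanSingleton ℚ QS
      (if ellU (Equiv.swap α β * ζ) = ellU ζ + 1 then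
        Finsupp.single (Equiv.swap α β * ζ) (1 : ℚ)
      else 0))

/-- Index type for the generators `u_{αβ}`, `0 < α < β`. -/
abbrev Gen : Type := {p : ℕ+ × ℕ+ // p.1 < p.2}

/-- For `L = [(α₁,β₁),…,(αₙ,βₙ)]`, the composition `û_{αₙβₙ}∘⋯∘û_{α₁β₁}`
(the operator `û_{α₁β₁}` acts first). -/
def wordOp (L : List Gen) : QS →ₗ[ℚ] QS :=
  L.foldl (fun f p => (uhat p.val.1 p.val.2).comp f) LinearMap.id

/-- The universal `k`-Bruhat order `≼`. -/
def uBruhat (η ζ : Sinf) : Prop :=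
  ∃ u : Sinf, FinSupp u ∧ ∃ k : ℕ+, kBruhat k u (η * u) ∧ kBruhat k (η * u) (ζ * u)

/-- `ζ` covers `η` in `≼`. -/
def uCover (η ζ : Sinf) : Prop :=
  uBruhat η ζ ∧ η ≠ ζ ∧ ∀ ξ : Sinf, uBruhat η ξ → uBruhat ξ ζ → ξ = η ∨ ξ = ζ

/-- `up(ζ) = {j : ζ⁻¹(j) < j}`. -/
def upS (ζ : Sinf) : Set ℕ+ := {j | ζ⁻¹ j < j}

/-- `dw(ζ) = {j : ζ⁻¹(j) > j}`. -/
def dwS (ζ : Sinf) : Set ℕ+ := {j | j < ζ⁻¹ j}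

/-- `R_u(ζ)`: the `u`-reduced sequences for `ζ`, i.e. sequences
`((α₁,β₁),…,(αₙ,βₙ))` with `û_{αₙβₙ}∘⋯∘û_{α₁β₁}(1) = ζ`. -/
def Rset (ζ : Sinf) : Set (List Gen) :=
  {L | wordOp L (Finsupp.single 1 1) = Finsupp.single ζ 1}

/-- `H_p(ζ)`: empty if some `pᵢ < 0`; otherwise those `u`-reduced sequences for `ζ`
whose `α`'s strictly increase within each consecutive block of sizes `p₁,…,p_r`
(indices `i, i+1` lie in the same block iff `i+1` is not a partial sum of `p`). -/
def Hset (p : List ℤ) (ζ : Sinf) : Set (List Gen) :=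
  {L | L ∈ Rset ζ ∧ (∀ x ∈ p, 0 ≤ x) ∧
    ∀ (i : ℕ) (q r : Gen), L[i]? = some q → L[i + 1]? = some r →
      (∀ t : ℕ, (p.take t).sum ≠ (i : ℤ) + 1) → q.val.1 < r.val.1}

/-- `E_p(ζ)`: as `H_p(ζ)` but with the `α`'s strictly decreasing in each block. -/
def Eset (p : List ℤ) (ζ : Sinf) : Set (List Gen) :=
  {L | L ∈ Rset ζ ∧ (∀ x ∈ p, 0 ≤ x) ∧
    ∀ (i : ℕ) (q r : Gen), L[i]? = some q → L[i + 1]? = some r →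
      (∀ t : ℕ, (p.take t).sum ≠ (i : ℤ) + 1) → r.val.1 < q.val.1}

/-- `E'_p(ζ)`: as `H_p(ζ)` but with the `β`'s strictly decreasing in each block. -/
def E'set (p : List ℤ) (ζ : Sinf) : Set (List Gen) :=
  {L | L ∈ Rset ζ ∧ (∀ x ∈ p, 0 ≤ x) ∧
    ∀ (i : ℕ) (q r : Gen), L[i]? = some q → L[i + 1]? = some r →
      (∀ t : ℕ, (p.take t).sum ≠ (i : ℤ) + 1) → r.val.2 < q.val.2}

/-- The integer sequence `λ_σ = (λ_{σ(i)} + i − σ(i))ᵢ` (here `0`-indexed). -/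
def lamSeq (r : ℕ) (lam : Fin r → ℕ) (σ : Equiv.Perm (Fin r)) : List ℤ :=
  (List.finRange r).map (fun i => (lam (σ i) : ℤ) + (i : ℤ) - ((σ i : ℕ) : ℤ))

/-- `c_λ^ζ := Σ_{σ ∈ S_r} ε(σ)·|H_{λ_σ}(ζ)|`. -/
def cCoef (r : ℕ) (lam : Fin r → ℕ) (ζ : Sinf) : ℤ :=
  ∑ σ : Equiv.Perm (Fin r),
    ((Equiv.Perm.sign σ : ℤˣ) : ℤ) * ((Hset (lamSeq r lam σ) ζ).ncard : ℤ)

/-- The free monoid-with-zero on the generators `u_{αβ}`. -/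
abbrev FM : Type := WithZero (FreeMonoid Gen)

/-- The generator `u_{αβ}` as an element of `FM`. -/
def g (α β : ℕ+) (h : α < β) : FM :=
  ((FreeMonoid.of (⟨(α, β), h⟩ : Gen) : FreeMonoid Gen) : FM)

/-- The defining relations (1)–(5) of the monoid `M`. -/
inductive MRel : FM → FM → Prop
  | r1 (α β γ δ : ℕ+) (h1 : α < β) (h2 : β < γ) (h3 : γ < δ) :
      MRel (g β γ h2 * g γ δ h3 * g α γ (h1.trans h2))
           (g β δ (h2.trans h3) * g α β h1 * g β γ h2)
  | r2 (α β γ δ : ℕ+) (h1 : α < β) (h2 : β < γ) (h3 : γ < δ) :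
      MRel (g α γ (h1.trans h2) * g γ δ h3 * g β γ h2)
           (g β γ h2 * g α β h1 * g β δ (h2.trans h3))
  | r3a (α β γ δ : ℕ+) (h1 : α < β) (h2 : γ < δ) (h : β < γ) :
      MRel (g α β h1 * g γ δ h2) (g γ δ h2 * g α β h1)
  | r3b (α β γ δ : ℕ+) (h1 : α < β) (h2 : γ < δ) (h3 : α < γ) (h4 : δ < β) :
      MRel (g α β h1 * g γ δ h2) (g γ δ h2 * g α β h1)
  | r4a (α β γ δ : ℕ+) (h1 : α ≤ β) (h2 : β < γ) (h3 : γ ≤ δ) :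
      MRel (g α γ (h1.trans_lt h2) * g β δ (h2.trans_le h3)) 0
  | r4b (α β γ δ : ℕ+) (h1 : α ≤ β) (h2 : β < γ) (h3 : γ ≤ δ) :
      MRel (g β δ (h2.trans_le h3) * g α γ (h1.trans_lt h2)) 0
  | r5a (α β γ : ℕ+) (h1 : α < β) (h2 : β < γ) :
      MRel (g β γ h2 * g α β h1 * g β γ h2) 0
  | r5b (α β γ : ℕ+) (h1 : α < β) (h2 : β < γ) :
      MRel (g α β h1 * g β γ h2 * g α β h1) 0

/-- The congruence generated by the relations (1)–(5); the monoid `M` is its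
quotient `MCon.Quotient`. -/
def MCon : Con FM := conGen MRel

/-- The word `u_{αₙβₙ}⋯u_{α₁β₁} ∈ FM` for `L = [(α₁,β₁),…,(αₙ,βₙ)]`. -/
def wordFM (L : List Gen) : FM :=
  ((FreeMonoid.ofList L.reverse : FreeMonoid Gen) : FM)

/-- The generator `u_{αβ}` in the free monoid (no zero). -/
def g3 (α β : ℕ+) (h : α < β) : FreeMonoid Gen := FreeMonoid.of ⟨(α, β), h⟩

/-- The relations (1)–(3) only, on the free monoid (no zero). -/
inductive MRel3 : FreeMonoid Gen → FreeMonoid Gen → Prop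
  | r1 (α β γ δ : ℕ+) (h1 : α < β) (h2 : β < γ) (h3 : γ < δ) :
      MRel3 (g3 β γ h2 * g3 γ δ h3 * g3 α γ (h1.trans h2))
            (g3 β δ (h2.trans h3) * g3 α β h1 * g3 β γ h2)
  | r2 (α β γ δ : ℕ+) (h1 : α < β) (h2 : β < γ) (h3 : γ < δ) :
      MRel3 (g3 α γ (h1.trans h2) * g3 γ δ h3 * g3 β γ h2)
            (g3 β γ h2 * g3 α β h1 * g3 β δ (h2.trans h3))
  | r3a (α β γ δ : ℕ+) (h1 : α < β) (h2 : γ < δ) (h : β < γ) :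
      MRel3 (g3 α β h1 * g3 γ δ h2) (g3 γ δ h2 * g3 α β h1)
  | r3b (α β γ δ : ℕ+) (h1 : α < β) (h2 : γ < δ) (h3 : α < γ) (h4 : δ < β) :
      MRel3 (g3 α β h1 * g3 γ δ h2) (g3 γ δ h2 * g3 α β h1)

/-- The word (with letters `(αᵢ,βᵢ)`) encoding a maximal chain of `[u,w]ₖ`:
there are permutations `u = u₀ <ₖ u₁ <ₖ ⋯ <ₖ uₙ = w` (each step a `k`-Bruhat
cover) with `uᵢ₊₁ = (αᵢ₊₁ βᵢ₊₁)·uᵢ`. -/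
def IsChainWord (k : ℕ+) (u w : Sinf) (L : List Gen) : Prop :=
  ∃ c : ℕ → Sinf, c 0 = u ∧ c L.length = w ∧
    ∀ (i : ℕ) (q : Gen), L[i]? = some q →
      kCover k (c i) (c (i + 1)) ∧ c (i + 1) = Equiv.swap q.val.1 q.val.2 * c i

/-- For an order-preserving `f`, the induced map on generators
`(α,β) ↦ (f α, f β)`. -/
def genMap (f : ℕ+ → ℕ+) (p : Gen) : Gen :=
  if h : f p.val.1 < f p.val.2 then ⟨(f p.val.1, f p.val.2), h⟩ else p

/-- For an order-reversing `f`, the induced map on generators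
`(α,β) ↦ (f β, f α)`. -/
def vmapGen (f : ℕ+ → ℕ+) (p : Gen) : Gen :=
  if h : f p.val.2 < f p.val.1 then ⟨(f p.val.2, f p.val.1), h⟩ else p

/-- The map `φ_a : {1,2,…} → {1,2,…}`, `i ↦ i` for `i < a` and `i ↦ i+1` for `i ≥ a`. -/
def phiF (a : ℕ+) (i : ℕ+) : ℕ+ := if i < a then i else i + 1

end

/-!
A `k`-cover `x ⋖ₖ x·(a b)` means `a ≤ k < b`, `x a < x b`, and no position strictly between
`a` and `b` carries a value strictly between `x a` and `x b`: this is read off from the count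
`ℓ(x·(a b)) = ℓ(x) + 1 + 2·#{such middle positions}`. Consequently, along a chain `u ≤ₖ w`
the values at positions `≤ k` only grow, those at positions `> k` only shrink, and every new
inversion straddles `k`.

Put `g = u⁻¹u'`, so that `u' = ug`, `w' = wg`, and `vg` carries the value `v t` at position
`g⁻¹ t`. Given a cover `x ⋖ₖ x·(a b)` in `[u, w]ₖ`, these constraints for `u ≤ₖ w` force
`g⁻¹ a ≤ k' < g⁻¹ b`, and a middle position for `xg` would produce two new inversions of
`ug ≤_{k'} wg` on opposite sides of `k'`. So covers of `[u, w]ₖ` go to covers of `[u', w']_{k'}`,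
and the same argument for `g⁻¹` inverts the map.
-/

open Equiv Finset

def inversions (w : Sinf) : Set (ℕ+ × ℕ+) := {p | p.1 < p.2 ∧ w p.2 < w p.1}

theorem len_eq_ncard_inversions (w : Sinf) : len w = (inversions w).ncard := rfl

theorem FinSupp.mul {x y : Sinf} (hx : FinSupp x) (hy : FinSupp y) : FinSupp (x * y) :=
  (hx.union hy).subset fun i hi => by
    by_contra h
    simp only [Set.mem_union, Set.mem_ofPred_eq, not_or, not_not] at h
    exact hi (by simp [h.1, h.2])

theorem FinSupp.inv {x : Sinf} (hx : FinSupp x) : FinSupp x⁻¹ :=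
  hx.subset fun _ hi h => hi (Perm.inv_eq_iff_eq.2 h.symm)

theorem finSupp_swap (a b : ℕ+) : FinSupp (swap a b) :=
  (Set.toFinite {a, b}).subset fun i hi => by
    by_contra h
    simp only [Set.mem_insert_iff, Set.mem_singleton_iff, not_or] at h
    exact hi (swap_apply_of_ne_of_ne h.1 h.2)

theorem FinSupp.inversions_finite {x : Sinf} (hx : FinSupp x) : (inversions x).Finite := by
  obtain ⟨N, hN⟩ := hx.bddAbove
  have fixed : ∀ i, N < i → x i = i := fun i hi => by_contra fun h => (hN h).not_gt hi
  refine ((Set.finite_Iic N).prod (Set.finite_Iic N)).subset fun ⟨i, j⟩ ⟨hij, hinv⟩ => ?_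
  have hj : j ≤ N := by
    by_contra! hj
    have hxj := fixed j hj
    -- `x i > j > N`, so `x` fixes `x i` and therefore `i`
    have hxi : x i = i := x.injective (fixed _ (hj.trans (hxj ▸ hinv)))
    exact (hxi ▸ hxj ▸ hinv).not_gt hij
  exact ⟨hij.le.trans hj, hj⟩

theorem len_mul_add_ncard {x s : Sinf} (hx : (inversions x).Finite)
    (hs : (inversions s⁻¹).Finite) :
    len (x * s) + {p ∈ inversions s⁻¹ | x p.2 < x p.1}.ncard =
      len x + {p ∈ inversions s⁻¹ | x p.1 < x p.2}.ncard := by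
  set C := {p : ℕ+ × ℕ+ | p.1 < p.2 ∧ s⁻¹ p.1 < s⁻¹ p.2 ∧ x p.2 < x p.1}
  have hC : C.Finite := hx.subset fun p hp => ⟨hp.1, hp.2.2⟩
  -- relabelling positions by `s`, the inversions of `x * s` and of `x` only differ on the
  -- pairs whose order `s⁻¹` reverses
  have hlen : len (x * s) = {p : ℕ+ × ℕ+ | s⁻¹ p.1 < s⁻¹ p.2 ∧ x p.2 < x p.1}.ncard := by
    rw [len_eq_ncard_inversions, ← Set.ncard_image_of_injective _ (prodCongr s s).injective,
      Equiv.image_eq_preimage_symm]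
    apply congrArg Set.ncard
    ext p
    simp [inversions]
  have hsplit_x : inversions x = C ∪ {p ∈ inversions s⁻¹ | x p.2 < x p.1} := by
    ext p
    simp only [inversions, C, Set.mem_union, Set.mem_ofPred_eq]
    have := (s⁻¹).injective.ne_iff (x := p.1) (y := p.2)
    grind
  have hsplit_xs : {p : ℕ+ × ℕ+ | s⁻¹ p.1 < s⁻¹ p.2 ∧ x p.2 < x p.1} =
      C ∪ Prod.swap '' {p ∈ inversions s⁻¹ | x p.1 < x p.2} := by
    ext p
    simp only [inversions, C, Set.mem_union, Set.mem_ofPred_eq, Set.image_swap_eq_preimage_swap,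
      Set.mem_preimage, Prod.fst_swap, Prod.snd_swap]
    have := (s⁻¹).injective.ne_iff (x := p.1) (y := p.2)
    grind
  have hR : {p ∈ inversions s⁻¹ | x p.1 < x p.2}.Finite := hs.subset (Set.sep_subset _ _)
  have hdisj_x : Disjoint C {p ∈ inversions s⁻¹ | x p.2 < x p.1} :=
    Set.disjoint_left.2 fun _ hpC hp => hp.1.2.not_gt hpC.2.1
  have hdisj_xs : Disjoint C (Prod.swap '' {p ∈ inversions s⁻¹ | x p.1 < x p.2}) := by
    rw [Set.disjoint_left]
    rintro _ hpC ⟨q, hq, rfl⟩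
    exact hq.1.1.not_gt hpC.1
  rw [hlen, len_eq_ncard_inversions x, hsplit_x, hsplit_xs,
    Set.ncard_union_eq hdisj_x hC (hs.subset (Set.sep_subset _ _)),
    Set.ncard_union_eq hdisj_xs hC (hR.image _), Set.ncard_image_of_injective _ Prod.swap_injective]
  ring

theorem inversions_swap {a b : ℕ+} (hab : a < b) :
    inversions (swap a b) = ↑((Ioc a b).image (a, ·) ∪ (Ioo a b).image (·, b)) := by
  ext ⟨p, q⟩
  simp only [inversions, Set.mem_ofPred_eq, coe_union, coe_image, coe_Ioc, coe_Ioo, Set.mem_union,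
    Set.mem_image, Set.mem_Ioc, Set.mem_Ioo, Prod.mk.injEq]
  grind

theorem len_mul_swap {x : Sinf} (hx : (inversions x).Finite) {a b : ℕ+} (hab : a < b)
    (hv : x a < x b) :
    len (x * swap a b) = len x + 1 + 2 * #{c ∈ Ioo a b | x a < x c ∧ x c < x b} := by
  have key := len_mul_add_ncard hx (s := swap a b)
    (by rw [swap_inv, inversions_swap hab]; exact Finset.finite_toSet _)
  have hdisj : Disjoint ((Ioc a b).image (a, ·)) ((Ioo a b).image (·, b)) := by
    simp only [Finset.disjoint_left, Finset.mem_image, Finset.mem_Ioc, Finset.mem_Ioo]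
    grind
  simp only [swap_inv, inversions_swap hab, Finset.mem_coe, ← Finset.coe_filter,
    Set.ncard_coe_finset] at key
  rw [Finset.card_filter, Finset.card_filter, sum_union hdisj, sum_union hdisj,
    sum_image (by simp), sum_image (by simp), sum_image (by simp), sum_image (by simp),
    ← Ioo_insert_right hab, sum_insert (by simp), sum_insert (by simp)] at key
  -- `c ∈ Ioo a b` contributes the pairs `(a, c)` and `(c, b)`; the two sides of `key` count
  -- them differently exactly when `x c` lies between `x a` and `x b`
  have hsum : ∑ c ∈ Ioo a b, ((if x a < x c then 1 else 0) + if x c < x b then 1 else 0) =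
      ∑ c ∈ Ioo a b, ((if x c < x a then 1 else 0) + (if x b < x c then 1 else 0) +
        2 * if x a < x c ∧ x c < x b then 1 else 0) := by
    refine sum_congr rfl fun c hc => ?_
    have := x.injective.ne (Finset.mem_Ioo.1 hc).1.ne'
    have := x.injective.ne (Finset.mem_Ioo.1 hc).2.ne
    split_ifs <;> grind
  simp only [sum_add_distrib, ← mul_sum, ← Finset.card_filter, hv, hv.not_gt] at hsum key
  simp only [↓reduceIte, zero_add] at key
  omega

theorem len_mul_swap_eq_succ_iff {x : Sinf} (hx : (inversions x).Finite) {a b : ℕ+}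
    (hab : a < b) :
    len (x * swap a b) = len x + 1 ↔
      x a < x b ∧ ∀ c ∈ Set.Ioo a b, x c ∉ Set.Ioo (x a) (x b) := by
  rcases lt_or_gt_of_ne (x.injective.ne hab.ne) with hv | hv
  · rw [len_mul_swap hx hab hv]
    simp [hv, Finset.filter_eq_empty_iff]
  · refine iff_of_false (fun hlen => ?_) (fun h => h.1.not_gt hv)
    -- `x = (x * swap a b) * swap a b` and this step increases the length
    have hy : (inversions (x * swap a b)).Finite :=
      Set.finite_of_ncard_ne_zero (hlen.trans_ne (Nat.succ_ne_zero _))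
    have := len_mul_swap hy hab (by simpa using hv)
    rw [mul_swap_mul_self] at this
    omega

theorem kCover_iff {k : ℕ+} {x y : Sinf} (hx : (inversions x).Finite) :
    kCover k x y ↔ ∃ a b, a ≤ k ∧ k < b ∧ y = x * swap a b ∧
      x a < x b ∧ ∀ c ∈ Set.Ioo a b, x c ∉ Set.Ioo (x a) (x b) := by
  constructor
  · rintro ⟨hlen, a, b, hak, hkb, rfl⟩
    exact ⟨a, b, hak, hkb, rfl, (len_mul_swap_eq_succ_iff hx (hak.trans_lt hkb)).1 hlen⟩
  · rintro ⟨a, b, hak, hkb, rfl, hab⟩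
    exact ⟨(len_mul_swap_eq_succ_iff hx (hak.trans_lt hkb)).2 hab, a, b, hak, hkb, rfl⟩

theorem kCover.inversions_finite {k : ℕ+} {x y : Sinf} (h : kCover k x y) :
    (inversions y).Finite :=
  Set.finite_of_ncard_ne_zero (h.1.trans_ne (Nat.succ_ne_zero _))

section Chains

variable {k : ℕ+} {u w : Sinf}

theorem kBruhat.inversions_finite (h : kBruhat k u w) (hu : (inversions u).Finite) :
    (inversions w).Finite := by
  induction h with
  | refl => exact hu
  | tail _ hc _ => exact hc.inversions_finite

theorem kBruhat.finSupp (h : kBruhat k u w) (hu : FinSupp u) : FinSupp w := by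
  induction h with
  | refl => exact hu
  | tail _ hc ih =>
    obtain ⟨-, a, b, -, -, rfl⟩ := hc
    exact ih.mul (finSupp_swap a b)

theorem kBruhat.apply_le_apply (h : kBruhat k u w) (hu : (inversions u).Finite) {c : ℕ+} :
    (c ≤ k → u c ≤ w c) ∧ (k < c → w c ≤ u c) := by
  induction h with
  | refl => simp
  | @tail v w hv hc ih =>
    obtain ⟨a, b, hak, hkb, rfl, hab, -⟩ := (kCover_iff (kBruhat.inversions_finite hv hu)).1 hc
    simp only [Perm.mul_apply, swap_apply_def]
    grind

theorem kCover.le_and_lt_of_inversion {x y : Sinf} (h : kCover k x y) (hx : (inversions x).Finite)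
    {p q : ℕ+} (hpq : p < q) (hxpq : x p < x q) (hyqp : y q < y p) : p ≤ k ∧ k < q := by
  obtain ⟨a, b, hak, hkb, rfl, hab, hmid⟩ := (kCover_iff hx).1 h
  simp only [Perm.mul_apply, swap_apply_def] at hyqp
  simp only [Set.mem_Ioo] at hmid
  grind

theorem kBruhat.le_and_lt_of_inversion (h : kBruhat k u w) (hu : (inversions u).Finite)
    {p q : ℕ+} (hpq : p < q) (hupq : u p < u q) (hwqp : w q < w p) : p ≤ k ∧ k < q := by
  induction h with
  | refl => exact absurd hupq hwqp.not_gt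
  | @tail v w hv hc ih =>
    rcases lt_or_gt_of_ne (v.injective.ne hpq.ne) with hvpq | hvqp
    · exact hc.le_and_lt_of_inversion (kBruhat.inversions_finite hv hu) hpq hvpq hwqp
    · exact ih hvqp

theorem kBruhat.apply_lt_apply (h : kBruhat k u w) (hu : (inversions u).Finite)
    {p q : ℕ+} (hpq : p < q) (hside : q ≤ k ∨ k < p) (hupq : u p < u q) : w p < w q := by
  refine (lt_or_gt_of_ne (w.injective.ne hpq.ne)).resolve_right fun hwqp => ?_
  have := h.le_and_lt_of_inversion hu hpq hupq hwqp
  rcases hside with hq | hp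
  · exact this.2.not_ge hq
  · exact this.1.not_gt hp

end Chains

section Transport

variable {k k' : ℕ+} {u w g x : Sinf}

theorem apply_mem_Ioo_of_lt_or_gt {a b t : ℕ+} (hu : (inversions u).Finite)
    (hy : (inversions (x * swap a b)).Finite) (hux : kBruhat k u x)
    (hyw : kBruhat k (x * swap a b) w) (hak : a ≤ k) (hkb : k < b) (ht : t < a ∨ b < t)
    (hxt : x t ∈ Set.Ioo (x a) (x b)) :
    u t ∈ Set.Ioo (u a) (u b) ∧ w t ∈ Set.Ioo (w b) (w a) := by
  obtain ⟨hat, htb⟩ := hxt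
  have hyt : (x * swap a b) t = x t := by
    rw [Perm.mul_apply, swap_apply_of_ne_of_ne (by rintro rfl; exact hat.ne rfl)
      (by rintro rfl; exact htb.ne rfl)]
  have hua : u a ≤ x a := (hux.apply_le_apply hu).1 hak
  have hub : x b ≤ u b := (hux.apply_le_apply hu).2 hkb
  have hwa : x b ≤ w a := by simpa using (hyw.apply_le_apply hy).1 hak
  have hwb : w b ≤ x a := by simpa using (hyw.apply_le_apply hy).2 hkb
  rcases ht with hta | hbt
  · have htk : t ≤ k := hta.le.trans hak
    refine ⟨⟨(lt_or_gt_of_ne (u.injective.ne hta.ne')).resolve_right fun h =>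
        (hux.apply_lt_apply hu hta (.inl hak) h).not_gt hat,
      ((hux.apply_le_apply hu).1 htk).trans_lt (htb.trans_le hub)⟩,
      hwb.trans_lt (hat.trans_le (hyt ▸ (hyw.apply_le_apply hy).1 htk)),
      hyw.apply_lt_apply hy hta (.inl hak) (by simpa [hyt] using htb)⟩
  · have hkt : k < t := hkb.trans hbt
    refine ⟨⟨hua.trans_lt (hat.trans_le ((hux.apply_le_apply hu).2 hkt)),
      (lt_or_gt_of_ne (u.injective.ne hbt.ne')).resolve_right fun h =>
        (hux.apply_lt_apply hu hbt (.inr hkb) h).not_gt htb⟩,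
      hyw.apply_lt_apply hy hbt (.inr hkb) (by simpa [hyt] using hat),
      (hyt ▸ (hyw.apply_le_apply hy).2 hkt).trans_lt (htb.trans_le hwa)⟩

theorem kCover.mul_right {y : Sinf} (hu : FinSupp u) (hg : FinSupp g)
    (hux : kBruhat k u x) (hxy : kCover k x y) (hyw : kBruhat k y w)
    (h' : kBruhat k' (u * g) (w * g)) : kCover k' (x * g) (y * g) := by
  have hu_fin := hu.inversions_finite
  have hug := (hu.mul hg).inversions_finite
  have hx := hux.finSupp hu
  have hy := hxy.inversions_finite
  obtain ⟨a, b, hak, hkb, rfl, hab, hmid⟩ := (kCover_iff hx.inversions_finite).1 hxy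
  have hua : u a ≤ x a := (hux.apply_le_apply hu_fin).1 hak
  have hub : x b ≤ u b := (hux.apply_le_apply hu_fin).2 hkb
  have hwa : x b ≤ w a := by simpa using (hyw.apply_le_apply hy).1 hak
  have hwb : w b ≤ x a := by simpa using (hyw.apply_le_apply hy).2 hkb
  have ha' : g⁻¹ a ≤ k' := by
    by_contra! h
    have : w a ≤ u a := by simpa using (h'.apply_le_apply hug).2 h
    exact this.not_gt (hua.trans_lt (hab.trans_le hwa))
  have hb' : k' < g⁻¹ b := by
    by_contra! h
    have : u b ≤ w b := by simpa using (h'.apply_le_apply hug).1 h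
    exact this.not_gt (hwb.trans_lt (hab.trans_le hub))
  refine (kCover_iff (hx.mul hg).inversions_finite).2
    ⟨g⁻¹ a, g⁻¹ b, ha', hb', ?_, by simpa using hab, ?_⟩
  · rw [swap_apply_apply, inv_inv]
    group
  · rintro c ⟨hac, hcb⟩ ⟨hxa, hxb⟩
    simp only [Perm.mul_apply, Perm.coe_inv, apply_symm_apply] at hxa hxb
    have ht : g c < a ∨ b < g c := by
      rcases lt_or_gt_of_ne (show g c ≠ a by rintro h; exact hxa.ne (by rw [h])) with h | hat
      · exact .inl h
      rcases lt_or_gt_of_ne (show g c ≠ b by rintro h; exact hxb.ne (by rw [h])) with hbt | h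
      · exact absurd ⟨hxa, hxb⟩ (hmid (g c) ⟨hat, hbt⟩)
      · exact .inr h
    obtain ⟨⟨hua_t, hut_b⟩, hwb_t, hwt_a⟩ :=
      apply_mem_Ioo_of_lt_or_gt hu_fin hy hux hyw hak hkb ht ⟨hxa, hxb⟩
    -- then `(g⁻¹ a, c)` and `(c, g⁻¹ b)` would both be new inversions of `u g ≤ w g`
    have h₁ := h'.le_and_lt_of_inversion hug hac (by simpa using hua_t) (by simpa using hwt_a)
    have h₂ := h'.le_and_lt_of_inversion hug hcb (by simpa using hut_b) (by simpa using hwb_t)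
    exact h₁.2.not_ge h₂.1

theorem kBruhat.mul_right {y : Sinf} (hu : FinSupp u) (hg : FinSupp g)
    (h' : kBruhat k' (u * g) (w * g)) (hux : kBruhat k u x) (hxy : kBruhat k x y)
    (hyw : kBruhat k y w) : kBruhat k' (x * g) (y * g) := by
  induction hxy using Relation.ReflTransGen.head_induction_on with
  | refl => exact .refl
  | head hxz hzy ih =>
    exact .head (hxz.mul_right hu hg hux (hzy.trans hyw) h') (ih (hux.tail hxz))

end Transport

theorem kBruhat_interval_mul_right {k k' : ℕ+} {u w g : Sinf} (hu : FinSupp u) (hg : FinSupp g)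
    (h : kBruhat k u w) (h' : kBruhat k' (u * g) (w * g)) :
    (∀ v : Sinf, (kBruhat k u v ∧ kBruhat k v w) ↔
      (kBruhat k' (u * g) (v * g) ∧ kBruhat k' (v * g) (w * g))) ∧
    (∀ v₁ v₂ : Sinf,
      kBruhat k u v₁ → kBruhat k v₁ w → kBruhat k u v₂ → kBruhat k v₂ w →
      (kBruhat k v₁ v₂ ↔ kBruhat k' (v₁ * g) (v₂ * g))) := by
  have fwd {x y : Sinf} := kBruhat.mul_right (k := k) (x := x) (y := y) hu hg h'
  have bwd {x y : Sinf} :=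
    kBruhat.mul_right (k := k') (k' := k) (w := w * g) (x := x) (y := y) (hu.mul hg) hg.inv
      (by simpa using h)
  constructor
  · intro v
    constructor
    · rintro ⟨huv, hvw⟩
      exact ⟨fwd .refl huv hvw, fwd huv hvw .refl⟩
    · rintro ⟨huv, hvw⟩
      simpa using And.intro (bwd .refl huv hvw) (bwd huv hvw .refl)
  · intro v₁ v₂ hu₁ h₁w hu₂ h₂w
    refine ⟨fun h₁₂ => fwd hu₁ h₁₂ h₂w, fun h₁₂ => ?_⟩
    simpa using bwd (fwd .refl hu₁ h₁w) h₁₂ (fwd hu₂ h₂w .refl)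

theorem interval_isomorphism_general (k k' : ℕ+) (u w u' w' : Sinf)
    (hu : FinSupp u) (hu' : FinSupp u')
    (h : kBruhat k u w) (h' : kBruhat k' u' w')
    (hq : w * u⁻¹ = w' * u'⁻¹) :
    (∀ v : Sinf, (kBruhat k u v ∧ kBruhat k v w) ↔
      (kBruhat k' u' (v * u⁻¹ * u') ∧ kBruhat k' (v * u⁻¹ * u') w')) ∧
    (∀ v₁ v₂ : Sinf,
      kBruhat k u v₁ → kBruhat k v₁ w → kBruhat k u v₂ → kBruhat k v₂ w →
      (kBruhat k v₁ v₂ ↔ kBruhat k' (v₁ * u⁻¹ * u') (v₂ * u⁻¹ * u'))) := by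
  have hw' : w * (u⁻¹ * u') = w' := by rw [← mul_assoc, hq, inv_mul_cancel_right]
  have := kBruhat_interval_mul_right hu (hu.inv.mul hu') h (by rwa [mul_inv_cancel_left, hw'])
  simpa only [mul_assoc, mul_inv_cancel_left, hw'] using this

/-- Theorem E of [BS97a]. If `u ≤ₖ w`, `u' ≤_{k'} w'` and
`wu⁻¹ = w'(u')⁻¹`, then `v ↦ vu⁻¹u'` is a poset isomorphism
`[u,w]ₖ ≅ [u',w']_{k'}`. -/
theorem interval_isomorphism (k k' : ℕ+) (u w u' w' : Sinf)
    (hu : FinSupp u) (hw : FinSupp w) (hu' : FinSupp u') (hw' : FinSupp w')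
    (h : kBruhat k u w) (h' : kBruhat k' u' w')
    (hq : w * u⁻¹ = w' * u'⁻¹) :
    (∀ v : Sinf, (kBruhat k u v ∧ kBruhat k v w) ↔
      (kBruhat k' u' (v * u⁻¹ * u') ∧ kBruhat k' (v * u⁻¹ * u') w')) ∧
    (∀ v₁ v₂ : Sinf,
      kBruhat k u v₁ → kBruhat k v₁ w → kBruhat k u v₂ → kBruhat k v₂ w →
      (kBruhat k v₁ v₂ ↔ kBruhat k' (v₁ * u⁻¹ * u') (v₂ * u⁻¹ * u'))) :=
  interval_isomorphism_general k k' u w u' w' hu hu' h h' hq
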